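/- arXiv:1707.06177 — 3 statements merged into one kernel-verified Lean document; each statement's English description precedes it below -/
import Mathlib

section
/- Let d be an integer with 1 ≤ d ≤ 5 and set r = 9 − d. Let a_1, …, a_r be real numbers with 0 ≤ a_1 ≤ a_2 ≤ … ≤ a_r < 1. If a_3 − a_1 ≥ c_d, where c_1 = 0.9347, c_2 = 0.9206, c_3 = 0.8985, c_4 = 0.8595 and c_5 = 0.7698, then D_d(a_1, …, a_r) < 0. -/
open Finset

/-- The Donaldson–Futaki polynomial `D_d` for polarizations of `ℙ²`-type on a smooth
del Pezzo surface of degree `d`, with `r = 9 - d` parameters `a 1, …, a r`. -/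
noncomputable def Dpoly (d : ℕ) (a : ℕ → ℝ) : ℝ :=
  ((d : ℝ) + ∑ i ∈ Finset.Icc 1 (9 - d), a i) *
      (-(2 + a 1) ^ 3 - 3 * (1 - a 1) * (2 + a 1) ^ 2 +
        ∑ i ∈ Finset.Icc 2 (9 - d), (1 - a i) ^ 3) +
    3 * ((2 + a 1) ^ 2 + (1 - a 1) * (2 + a 1)) *
      ((d : ℝ) + 2 * ∑ i ∈ Finset.Icc 1 (9 - d), a i -
        ∑ i ∈ Finset.Icc 1 (9 - d), a i ^ 2)

/-- The thresholds `c_d` for the difference `a₃ - a₁` in the `ℙ²`-type case. -/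
noncomputable def cP2a3 (d : ℕ) : ℝ :=
  if d = 1 then 0.9347 else if d = 2 then 0.9206 else if d = 3 then 0.8985
  else if d = 4 then 0.8595 else 0.7698

set_option maxHeartbeats 4000000

lemma cube_mono {p q : ℝ} (h : q ≤ p) : (1-p)^3 ≤ (1-q)^3 := by
  nlinarith [sq_nonneg ((1-p)+(1-q)), sq_nonneg ((1-p)-(1-q)), sq_nonneg (1-p), sq_nonneg (1-q)]

lemma tail_bound (d' m c x y q T U V : ℝ)
    (hx0 : 0 ≤ x) (hx1 : x ≤ 1) (hy : 0 ≤ y)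
    (hd : 1 ≤ d') (hm0 : 0 ≤ m) (hm6 : m ≤ 6)
    (hc : (0.7698:ℝ) ≤ c) (hqc : c ≤ q) (hq1 : q ≤ 1)
    (hT : m*q ≤ T) (hU : 2*q*T - m*q^2 ≤ U) (hV : V ≤ m*(1-q)^3) :
    (d' + (x+y+T))*(-(2+x)^2*(5-2*x) + (1-y)^3 + V)
      + 9*(2+x)*(d' + 2*(x+y+T) - (x^2+y^2+U))
    ≤ (d' + (x+y+m*q))*(-(2+x)^2*(5-2*x) + (1-y)^3 + m*(1-q)^3)
      + 9*(2+x)*(d' + 2*(x+y+m*q) - (x^2+y^2+m*q^2)) := by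
  have h1 : 0 ≤ T - m*q := by linarith
  have hq0 : 0 ≤ q := by linarith
  have hmq0 : 0 ≤ m*q := mul_nonneg hm0 hq0
  have hQ3 : (0:ℝ) ≤ (1-q)^3 := pow_nonneg (by linarith) 3
  have hQ3c : (1-q)^3 ≤ (1-c)^3 := cube_mono hqc
  have hK : 20 ≤ (2+x)^2*(5-2*x) := by nlinarith [mul_nonneg hx0 hx0, mul_nonneg (mul_nonneg hx0 hx0) hx0]
  have hky : (1-y)^3 ≤ 1 := by nlinarith [mul_nonneg hy (sq_nonneg (y - 3/2))]
  have hc3 : (1-c)^3 ≤ (0.2302:ℝ)^3 := by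
    have h := cube_mono hc
    convert h using 2 <;> norm_num
  have hmq3 : m*(1-q)^3 ≤ 6*(1-c)^3 := by
    have := mul_le_mul hm6 hQ3c hQ3 (by norm_num : (0:ℝ) ≤ 6)
    linarith
  have hlin : 18*(2+x)*(1-q) ≤ 54*(1-c) := by nlinarith
  have hbr : -(2+x)^2*(5-2*x) + (1-y)^3 + m*(1-q)^3 + 18*(2+x)*(1-q) ≤ 0 := by
    nlinarith
  have hprod : (T - m*q) * (-(2+x)^2*(5-2*x) + (1-y)^3 + m*(1-q)^3 + 18*(2+x)*(1-q)) ≤ 0 :=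
    mul_nonpos_of_nonneg_of_nonpos h1 hbr
  have e1 : (d'+x+y+T)*(V - m*(1-q)^3) ≤ 0 := by
    apply mul_nonpos_of_nonneg_of_nonpos
    · linarith
    · linarith
  have e2 : 9*(2+x)*(2*(T-m*q) - (U-m*q^2) - 2*(1-q)*(T-m*q)) ≤ 0 := by
    apply mul_nonpos_of_nonneg_of_nonpos
    · linarith
    · nlinarith
  nlinarith [hprod, e1, e2]

lemma finalP2_1 (x y : ℝ) (hx0 : 0 ≤ x) (hx1 : x + 0.9347 ≤ 1) (hxy : x ≤ y) (hy1 : y ≤ 1) :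
    ((1:ℝ)*1 + (x+y+6*(x+0.9347)))*(-(2+x)^2*(5-2*x) + (1-y)^3 + 6*(1-(x+0.9347))^3)
      + 9*(2+x)*((1:ℝ)*1 + 2*(x+y+6*(x+0.9347)) - (x^2+y^2+6*(x+0.9347)^2)) < 0 := by
  have h0 : ((1:ℝ)*1) = 1 := by norm_num
  rw [h0]
  nlinarith [sq_nonneg x, sq_nonneg y, sq_nonneg (x*y), sq_nonneg (x+y), sq_nonneg (x-y),
    mul_nonneg hx0 (le_trans hx0 hxy), mul_nonneg (mul_nonneg hx0 hx0) hx0,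
    mul_nonneg (le_trans hx0 hxy) (sq_nonneg y), mul_nonneg hx0 (sq_nonneg y),
    mul_nonneg hx0 (sq_nonneg x), mul_nonneg (le_trans hx0 hxy) (sq_nonneg x),
    mul_nonneg (mul_nonneg hx0 (le_trans hx0 hxy)) hx0,
    mul_nonneg hx0 (sub_nonneg.2 hy1), mul_nonneg (le_trans hx0 hxy) (sub_nonneg.2 hy1)]

lemma finalP2_2 (x y : ℝ) (hx0 : 0 ≤ x) (hx1 : x + 0.9206 ≤ 1) (hxy : x ≤ y) (hy1 : y ≤ 1) :
    ((1:ℝ)*2 + (x+y+5*(x+0.9206)))*(-(2+x)^2*(5-2*x) + (1-y)^3 + 5*(1-(x+0.9206))^3)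
      + 9*(2+x)*((1:ℝ)*2 + 2*(x+y+5*(x+0.9206)) - (x^2+y^2+5*(x+0.9206)^2)) < 0 := by
  have h0 : ((1:ℝ)*2) = 2 := by norm_num
  rw [h0]
  nlinarith [sq_nonneg x, sq_nonneg y, sq_nonneg (x*y), sq_nonneg (x+y), sq_nonneg (x-y),
    mul_nonneg hx0 (le_trans hx0 hxy), mul_nonneg (mul_nonneg hx0 hx0) hx0,
    mul_nonneg (le_trans hx0 hxy) (sq_nonneg y), mul_nonneg hx0 (sq_nonneg y),
    mul_nonneg hx0 (sq_nonneg x), mul_nonneg (le_trans hx0 hxy) (sq_nonneg x),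
    mul_nonneg (mul_nonneg hx0 (le_trans hx0 hxy)) hx0,
    mul_nonneg hx0 (sub_nonneg.2 hy1), mul_nonneg (le_trans hx0 hxy) (sub_nonneg.2 hy1)]

lemma finalP2_3 (x y : ℝ) (hx0 : 0 ≤ x) (hx1 : x + 0.8985 ≤ 1) (hxy : x ≤ y) (hy1 : y ≤ 1) :
    ((1:ℝ)*3 + (x+y+4*(x+0.8985)))*(-(2+x)^2*(5-2*x) + (1-y)^3 + 4*(1-(x+0.8985))^3)
      + 9*(2+x)*((1:ℝ)*3 + 2*(x+y+4*(x+0.8985)) - (x^2+y^2+4*(x+0.8985)^2)) < 0 := by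
  have h0 : ((1:ℝ)*3) = 3 := by norm_num
  rw [h0]
  nlinarith [sq_nonneg x, sq_nonneg y, sq_nonneg (x*y), sq_nonneg (x+y), sq_nonneg (x-y),
    mul_nonneg hx0 (le_trans hx0 hxy), mul_nonneg (mul_nonneg hx0 hx0) hx0,
    mul_nonneg (le_trans hx0 hxy) (sq_nonneg y), mul_nonneg hx0 (sq_nonneg y),
    mul_nonneg hx0 (sq_nonneg x), mul_nonneg (le_trans hx0 hxy) (sq_nonneg x),
    mul_nonneg (mul_nonneg hx0 (le_trans hx0 hxy)) hx0,
    mul_nonneg hx0 (sub_nonneg.2 hy1), mul_nonneg (le_trans hx0 hxy) (sub_nonneg.2 hy1)]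

lemma finalP2_4 (x y : ℝ) (hx0 : 0 ≤ x) (hx1 : x + 0.8595 ≤ 1) (hxy : x ≤ y) (hy1 : y ≤ 1) :
    ((1:ℝ)*4 + (x+y+3*(x+0.8595)))*(-(2+x)^2*(5-2*x) + (1-y)^3 + 3*(1-(x+0.8595))^3)
      + 9*(2+x)*((1:ℝ)*4 + 2*(x+y+3*(x+0.8595)) - (x^2+y^2+3*(x+0.8595)^2)) < 0 := by
  have h0 : ((1:ℝ)*4) = 4 := by norm_num
  rw [h0]
  nlinarith [sq_nonneg x, sq_nonneg y, sq_nonneg (x*y), sq_nonneg (x+y), sq_nonneg (x-y),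
    mul_nonneg hx0 (le_trans hx0 hxy), mul_nonneg (mul_nonneg hx0 hx0) hx0,
    mul_nonneg (le_trans hx0 hxy) (sq_nonneg y), mul_nonneg hx0 (sq_nonneg y),
    mul_nonneg hx0 (sq_nonneg x), mul_nonneg (le_trans hx0 hxy) (sq_nonneg x),
    mul_nonneg (mul_nonneg hx0 (le_trans hx0 hxy)) hx0,
    mul_nonneg hx0 (sub_nonneg.2 hy1), mul_nonneg (le_trans hx0 hxy) (sub_nonneg.2 hy1)]

lemma finalP2_5 (x y : ℝ) (hx0 : 0 ≤ x) (hx1 : x + 0.7698 ≤ 1) (hxy : x ≤ y) (hy1 : y ≤ 1) :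
    ((1:ℝ)*5 + (x+y+2*(x+0.7698)))*(-(2+x)^2*(5-2*x) + (1-y)^3 + 2*(1-(x+0.7698))^3)
      + 9*(2+x)*((1:ℝ)*5 + 2*(x+y+2*(x+0.7698)) - (x^2+y^2+2*(x+0.7698)^2)) < 0 := by
  have h0 : ((1:ℝ)*5) = 5 := by norm_num
  rw [h0]
  nlinarith [sq_nonneg x, sq_nonneg y, sq_nonneg (x*y), sq_nonneg (x+y), sq_nonneg (x-y),
    mul_nonneg hx0 (le_trans hx0 hxy), mul_nonneg (mul_nonneg hx0 hx0) hx0,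
    mul_nonneg (le_trans hx0 hxy) (sq_nonneg y), mul_nonneg hx0 (sq_nonneg y),
    mul_nonneg hx0 (sq_nonneg x), mul_nonneg (le_trans hx0 hxy) (sq_nonneg x),
    mul_nonneg (mul_nonneg hx0 (le_trans hx0 hxy)) hx0,
    mul_nonneg hx0 (sub_nonneg.2 hy1), mul_nonneg (le_trans hx0 hxy) (sub_nonneg.2 hy1)]

theorem P2_type_a3_a1_negative (d : ℕ) (hd1 : 1 ≤ d) (hd5 : d ≤ 5) (a : ℕ → ℝ)
    (h0 : 0 ≤ a 1)
    (hmono : ∀ i, 1 ≤ i → i < 9 - d → a i ≤ a (i + 1))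
    (hlt : a (9 - d) < 1)
    (hgap : a 3 - a 1 ≥ cP2a3 d) :
    Dpoly d a < 0 := by
  interval_cases d
  · -- d = 1
    have hc : cP2a3 1 = 0.9347 := by norm_num [cP2a3]
    rw [hc] at hgap
    have h12 : a 1 ≤ a 2 := hmono 1 (by norm_num) (by norm_num)
    have h23 : a 2 ≤ a 3 := hmono 2 (by norm_num) (by norm_num)
    have h34 : a 3 ≤ a 4 := hmono 3 (by norm_num) (by norm_num)
    have h45 : a 4 ≤ a 5 := hmono 4 (by norm_num) (by norm_num)
    have h56 : a 5 ≤ a 6 := hmono 5 (by norm_num) (by norm_num)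
    have h67 : a 6 ≤ a 7 := hmono 6 (by norm_num) (by norm_num)
    have h78 : a 7 ≤ a 8 := hmono 7 (by norm_num) (by norm_num)
    have hr1 : a 8 < 1 := hlt
    have hq3 : a 1 + 0.9347 ≤ a 3 := by linarith
    have hq4 : a 1 + 0.9347 ≤ a 4 := le_trans hq3 h34
    have hq5 : a 1 + 0.9347 ≤ a 5 := le_trans hq4 h45
    have hq6 : a 1 + 0.9347 ≤ a 6 := le_trans hq5 h56
    have hq7 : a 1 + 0.9347 ≤ a 7 := le_trans hq6 h67
    have hq8 : a 1 + 0.9347 ≤ a 8 := le_trans hq7 h78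
    have hq1' : a 1 + 0.9347 ≤ 1 := by linarith
    have hx1 : a 1 ≤ 1 := by linarith
    have hy1 : a 2 ≤ 1 := by linarith
    have hT : (6:ℝ)*(a 1 + 0.9347) ≤ a 3+a 4+a 5+a 6+a 7+a 8 := by linarith
    have hU : 2*(a 1 + 0.9347)*(a 3+a 4+a 5+a 6+a 7+a 8) - (6:ℝ)*(a 1 + 0.9347)^2 ≤ a 3^2+a 4^2+a 5^2+a 6^2+a 7^2+a 8^2 := by nlinarith [sq_nonneg (a 3 - (a 1 + 0.9347)), sq_nonneg (a 4 - (a 1 + 0.9347)), sq_nonneg (a 5 - (a 1 + 0.9347)), sq_nonneg (a 6 - (a 1 + 0.9347)), sq_nonneg (a 7 - (a 1 + 0.9347)), sq_nonneg (a 8 - (a 1 + 0.9347))]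
    have hV3 : (1 - a 3)^3 ≤ (1 - (a 1 + 0.9347))^3 := cube_mono hq3
    have hV4 : (1 - a 4)^3 ≤ (1 - (a 1 + 0.9347))^3 := cube_mono hq4
    have hV5 : (1 - a 5)^3 ≤ (1 - (a 1 + 0.9347))^3 := cube_mono hq5
    have hV6 : (1 - a 6)^3 ≤ (1 - (a 1 + 0.9347))^3 := cube_mono hq6
    have hV7 : (1 - a 7)^3 ≤ (1 - (a 1 + 0.9347))^3 := cube_mono hq7
    have hV8 : (1 - a 8)^3 ≤ (1 - (a 1 + 0.9347))^3 := cube_mono hq8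
    have hV : (1-a 3)^3+(1-a 4)^3+(1-a 5)^3+(1-a 6)^3+(1-a 7)^3+(1-a 8)^3 ≤ (6:ℝ)*(1-(a 1 + 0.9347))^3 := by linarith
    have s1 : ∑ i ∈ Finset.Icc 1 8, a i = a 1 + a 2 + (a 3+a 4+a 5+a 6+a 7+a 8) := by
      rw [show Finset.Icc 1 8 = ({1,2,3,4,5,6,7,8} : Finset ℕ) from rfl]
      norm_num [Finset.sum_insert, Finset.mem_insert]; try ring
    have s2 : ∑ i ∈ Finset.Icc 2 8, (1 - a i)^3 = (1 - a 2)^3 + ((1-a 3)^3+(1-a 4)^3+(1-a 5)^3+(1-a 6)^3+(1-a 7)^3+(1-a 8)^3) := by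
      rw [show Finset.Icc 2 8 = ({2,3,4,5,6,7,8} : Finset ℕ) from rfl]
      norm_num [Finset.sum_insert, Finset.mem_insert]; try ring
    have s3 : ∑ i ∈ Finset.Icc 1 8, (a i)^2 = a 1^2 + a 2^2 + (a 3^2+a 4^2+a 5^2+a 6^2+a 7^2+a 8^2) := by
      rw [show Finset.Icc 1 8 = ({1,2,3,4,5,6,7,8} : Finset ℕ) from rfl]
      norm_num [Finset.sum_insert, Finset.mem_insert]; try ring
    have key : Dpoly 1 a = ((1:ℝ)*1 + (a 1 + a 2 + (a 3+a 4+a 5+a 6+a 7+a 8)))*(-(2+a 1)^2*(5-2*a 1) + (1-a 2)^3 + ((1-a 3)^3+(1-a 4)^3+(1-a 5)^3+(1-a 6)^3+(1-a 7)^3+(1-a 8)^3))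
        + 9*(2+a 1)*((1:ℝ)*1 + 2*(a 1 + a 2 + (a 3+a 4+a 5+a 6+a 7+a 8)) - (a 1^2+a 2^2+(a 3^2+a 4^2+a 5^2+a 6^2+a 7^2+a 8^2))) := by
      unfold Dpoly
      rw [show (9 - 1 : ℕ) = 8 from rfl, s1, s2, s3]
      push_cast; ring
    calc Dpoly 1 a
        = ((1:ℝ)*1 + (a 1 + a 2 + (a 3+a 4+a 5+a 6+a 7+a 8)))*(-(2+a 1)^2*(5-2*a 1) + (1-a 2)^3 + ((1-a 3)^3+(1-a 4)^3+(1-a 5)^3+(1-a 6)^3+(1-a 7)^3+(1-a 8)^3))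
          + 9*(2+a 1)*((1:ℝ)*1 + 2*(a 1 + a 2 + (a 3+a 4+a 5+a 6+a 7+a 8)) - (a 1^2+a 2^2+(a 3^2+a 4^2+a 5^2+a 6^2+a 7^2+a 8^2))) := key
      _ ≤ ((1:ℝ)*1 + (a 1 + a 2 + (6:ℝ)*(a 1 + 0.9347)))*(-(2+a 1)^2*(5-2*a 1) + (1-a 2)^3 + (6:ℝ)*(1-(a 1 + 0.9347))^3)
          + 9*(2+a 1)*((1:ℝ)*1 + 2*(a 1 + a 2 + (6:ℝ)*(a 1 + 0.9347)) - (a 1^2+a 2^2+(6:ℝ)*(a 1 + 0.9347)^2)) :=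
        tail_bound ((1:ℝ)*1) 6 0.9347 (a 1) (a 2) (a 1 + 0.9347) (a 3+a 4+a 5+a 6+a 7+a 8) (a 3^2+a 4^2+a 5^2+a 6^2+a 7^2+a 8^2) ((1-a 3)^3+(1-a 4)^3+(1-a 5)^3+(1-a 6)^3+(1-a 7)^3+(1-a 8)^3)
          h0 hx1 (by linarith) (by norm_num) (by norm_num) (by norm_num)
          (by norm_num) (by linarith) hq1' hT hU hV
      _ < 0 := by
        have := finalP2_1 (a 1) (a 2) h0 hq1' h12 hy1
        exact this
  · -- d = 2
    have hc : cP2a3 2 = 0.9206 := by norm_num [cP2a3]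
    rw [hc] at hgap
    have h12 : a 1 ≤ a 2 := hmono 1 (by norm_num) (by norm_num)
    have h23 : a 2 ≤ a 3 := hmono 2 (by norm_num) (by norm_num)
    have h34 : a 3 ≤ a 4 := hmono 3 (by norm_num) (by norm_num)
    have h45 : a 4 ≤ a 5 := hmono 4 (by norm_num) (by norm_num)
    have h56 : a 5 ≤ a 6 := hmono 5 (by norm_num) (by norm_num)
    have h67 : a 6 ≤ a 7 := hmono 6 (by norm_num) (by norm_num)
    have hr1 : a 7 < 1 := hlt
    have hq3 : a 1 + 0.9206 ≤ a 3 := by linarith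
    have hq4 : a 1 + 0.9206 ≤ a 4 := le_trans hq3 h34
    have hq5 : a 1 + 0.9206 ≤ a 5 := le_trans hq4 h45
    have hq6 : a 1 + 0.9206 ≤ a 6 := le_trans hq5 h56
    have hq7 : a 1 + 0.9206 ≤ a 7 := le_trans hq6 h67
    have hq1' : a 1 + 0.9206 ≤ 1 := by linarith
    have hx1 : a 1 ≤ 1 := by linarith
    have hy1 : a 2 ≤ 1 := by linarith
    have hT : (5:ℝ)*(a 1 + 0.9206) ≤ a 3+a 4+a 5+a 6+a 7 := by linarith
    have hU : 2*(a 1 + 0.9206)*(a 3+a 4+a 5+a 6+a 7) - (5:ℝ)*(a 1 + 0.9206)^2 ≤ a 3^2+a 4^2+a 5^2+a 6^2+a 7^2 := by nlinarith [sq_nonneg (a 3 - (a 1 + 0.9206)), sq_nonneg (a 4 - (a 1 + 0.9206)), sq_nonneg (a 5 - (a 1 + 0.9206)), sq_nonneg (a 6 - (a 1 + 0.9206)), sq_nonneg (a 7 - (a 1 + 0.9206))]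
    have hV3 : (1 - a 3)^3 ≤ (1 - (a 1 + 0.9206))^3 := cube_mono hq3
    have hV4 : (1 - a 4)^3 ≤ (1 - (a 1 + 0.9206))^3 := cube_mono hq4
    have hV5 : (1 - a 5)^3 ≤ (1 - (a 1 + 0.9206))^3 := cube_mono hq5
    have hV6 : (1 - a 6)^3 ≤ (1 - (a 1 + 0.9206))^3 := cube_mono hq6
    have hV7 : (1 - a 7)^3 ≤ (1 - (a 1 + 0.9206))^3 := cube_mono hq7
    have hV : (1-a 3)^3+(1-a 4)^3+(1-a 5)^3+(1-a 6)^3+(1-a 7)^3 ≤ (5:ℝ)*(1-(a 1 + 0.9206))^3 := by linarith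
    have s1 : ∑ i ∈ Finset.Icc 1 7, a i = a 1 + a 2 + (a 3+a 4+a 5+a 6+a 7) := by
      rw [show Finset.Icc 1 7 = ({1,2,3,4,5,6,7} : Finset ℕ) from rfl]
      norm_num [Finset.sum_insert, Finset.mem_insert]; try ring
    have s2 : ∑ i ∈ Finset.Icc 2 7, (1 - a i)^3 = (1 - a 2)^3 + ((1-a 3)^3+(1-a 4)^3+(1-a 5)^3+(1-a 6)^3+(1-a 7)^3) := by
      rw [show Finset.Icc 2 7 = ({2,3,4,5,6,7} : Finset ℕ) from rfl]
      norm_num [Finset.sum_insert, Finset.mem_insert]; try ring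
    have s3 : ∑ i ∈ Finset.Icc 1 7, (a i)^2 = a 1^2 + a 2^2 + (a 3^2+a 4^2+a 5^2+a 6^2+a 7^2) := by
      rw [show Finset.Icc 1 7 = ({1,2,3,4,5,6,7} : Finset ℕ) from rfl]
      norm_num [Finset.sum_insert, Finset.mem_insert]; try ring
    have key : Dpoly 2 a = ((1:ℝ)*2 + (a 1 + a 2 + (a 3+a 4+a 5+a 6+a 7)))*(-(2+a 1)^2*(5-2*a 1) + (1-a 2)^3 + ((1-a 3)^3+(1-a 4)^3+(1-a 5)^3+(1-a 6)^3+(1-a 7)^3))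
        + 9*(2+a 1)*((1:ℝ)*2 + 2*(a 1 + a 2 + (a 3+a 4+a 5+a 6+a 7)) - (a 1^2+a 2^2+(a 3^2+a 4^2+a 5^2+a 6^2+a 7^2))) := by
      unfold Dpoly
      rw [show (9 - 2 : ℕ) = 7 from rfl, s1, s2, s3]
      push_cast; ring
    calc Dpoly 2 a
        = ((1:ℝ)*2 + (a 1 + a 2 + (a 3+a 4+a 5+a 6+a 7)))*(-(2+a 1)^2*(5-2*a 1) + (1-a 2)^3 + ((1-a 3)^3+(1-a 4)^3+(1-a 5)^3+(1-a 6)^3+(1-a 7)^3))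
          + 9*(2+a 1)*((1:ℝ)*2 + 2*(a 1 + a 2 + (a 3+a 4+a 5+a 6+a 7)) - (a 1^2+a 2^2+(a 3^2+a 4^2+a 5^2+a 6^2+a 7^2))) := key
      _ ≤ ((1:ℝ)*2 + (a 1 + a 2 + (5:ℝ)*(a 1 + 0.9206)))*(-(2+a 1)^2*(5-2*a 1) + (1-a 2)^3 + (5:ℝ)*(1-(a 1 + 0.9206))^3)
          + 9*(2+a 1)*((1:ℝ)*2 + 2*(a 1 + a 2 + (5:ℝ)*(a 1 + 0.9206)) - (a 1^2+a 2^2+(5:ℝ)*(a 1 + 0.9206)^2)) :=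
        tail_bound ((1:ℝ)*2) 5 0.9206 (a 1) (a 2) (a 1 + 0.9206) (a 3+a 4+a 5+a 6+a 7) (a 3^2+a 4^2+a 5^2+a 6^2+a 7^2) ((1-a 3)^3+(1-a 4)^3+(1-a 5)^3+(1-a 6)^3+(1-a 7)^3)
          h0 hx1 (by linarith) (by norm_num) (by norm_num) (by norm_num)
          (by norm_num) (by linarith) hq1' hT hU hV
      _ < 0 := by
        have := finalP2_2 (a 1) (a 2) h0 hq1' h12 hy1
        exact this
  · -- d = 3
    have hc : cP2a3 3 = 0.8985 := by norm_num [cP2a3]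
    rw [hc] at hgap
    have h12 : a 1 ≤ a 2 := hmono 1 (by norm_num) (by norm_num)
    have h23 : a 2 ≤ a 3 := hmono 2 (by norm_num) (by norm_num)
    have h34 : a 3 ≤ a 4 := hmono 3 (by norm_num) (by norm_num)
    have h45 : a 4 ≤ a 5 := hmono 4 (by norm_num) (by norm_num)
    have h56 : a 5 ≤ a 6 := hmono 5 (by norm_num) (by norm_num)
    have hr1 : a 6 < 1 := hlt
    have hq3 : a 1 + 0.8985 ≤ a 3 := by linarith
    have hq4 : a 1 + 0.8985 ≤ a 4 := le_trans hq3 h34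
    have hq5 : a 1 + 0.8985 ≤ a 5 := le_trans hq4 h45
    have hq6 : a 1 + 0.8985 ≤ a 6 := le_trans hq5 h56
    have hq1' : a 1 + 0.8985 ≤ 1 := by linarith
    have hx1 : a 1 ≤ 1 := by linarith
    have hy1 : a 2 ≤ 1 := by linarith
    have hT : (4:ℝ)*(a 1 + 0.8985) ≤ a 3+a 4+a 5+a 6 := by linarith
    have hU : 2*(a 1 + 0.8985)*(a 3+a 4+a 5+a 6) - (4:ℝ)*(a 1 + 0.8985)^2 ≤ a 3^2+a 4^2+a 5^2+a 6^2 := by nlinarith [sq_nonneg (a 3 - (a 1 + 0.8985)), sq_nonneg (a 4 - (a 1 + 0.8985)), sq_nonneg (a 5 - (a 1 + 0.8985)), sq_nonneg (a 6 - (a 1 + 0.8985))]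
    have hV3 : (1 - a 3)^3 ≤ (1 - (a 1 + 0.8985))^3 := cube_mono hq3
    have hV4 : (1 - a 4)^3 ≤ (1 - (a 1 + 0.8985))^3 := cube_mono hq4
    have hV5 : (1 - a 5)^3 ≤ (1 - (a 1 + 0.8985))^3 := cube_mono hq5
    have hV6 : (1 - a 6)^3 ≤ (1 - (a 1 + 0.8985))^3 := cube_mono hq6
    have hV : (1-a 3)^3+(1-a 4)^3+(1-a 5)^3+(1-a 6)^3 ≤ (4:ℝ)*(1-(a 1 + 0.8985))^3 := by linarith
    have s1 : ∑ i ∈ Finset.Icc 1 6, a i = a 1 + a 2 + (a 3+a 4+a 5+a 6) := by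
      rw [show Finset.Icc 1 6 = ({1,2,3,4,5,6} : Finset ℕ) from rfl]
      norm_num [Finset.sum_insert, Finset.mem_insert]; try ring
    have s2 : ∑ i ∈ Finset.Icc 2 6, (1 - a i)^3 = (1 - a 2)^3 + ((1-a 3)^3+(1-a 4)^3+(1-a 5)^3+(1-a 6)^3) := by
      rw [show Finset.Icc 2 6 = ({2,3,4,5,6} : Finset ℕ) from rfl]
      norm_num [Finset.sum_insert, Finset.mem_insert]; try ring
    have s3 : ∑ i ∈ Finset.Icc 1 6, (a i)^2 = a 1^2 + a 2^2 + (a 3^2+a 4^2+a 5^2+a 6^2) := by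
      rw [show Finset.Icc 1 6 = ({1,2,3,4,5,6} : Finset ℕ) from rfl]
      norm_num [Finset.sum_insert, Finset.mem_insert]; try ring
    have key : Dpoly 3 a = ((1:ℝ)*3 + (a 1 + a 2 + (a 3+a 4+a 5+a 6)))*(-(2+a 1)^2*(5-2*a 1) + (1-a 2)^3 + ((1-a 3)^3+(1-a 4)^3+(1-a 5)^3+(1-a 6)^3))
        + 9*(2+a 1)*((1:ℝ)*3 + 2*(a 1 + a 2 + (a 3+a 4+a 5+a 6)) - (a 1^2+a 2^2+(a 3^2+a 4^2+a 5^2+a 6^2))) := by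
      unfold Dpoly
      rw [show (9 - 3 : ℕ) = 6 from rfl, s1, s2, s3]
      push_cast; ring
    calc Dpoly 3 a
        = ((1:ℝ)*3 + (a 1 + a 2 + (a 3+a 4+a 5+a 6)))*(-(2+a 1)^2*(5-2*a 1) + (1-a 2)^3 + ((1-a 3)^3+(1-a 4)^3+(1-a 5)^3+(1-a 6)^3))
          + 9*(2+a 1)*((1:ℝ)*3 + 2*(a 1 + a 2 + (a 3+a 4+a 5+a 6)) - (a 1^2+a 2^2+(a 3^2+a 4^2+a 5^2+a 6^2))) := key
      _ ≤ ((1:ℝ)*3 + (a 1 + a 2 + (4:ℝ)*(a 1 + 0.8985)))*(-(2+a 1)^2*(5-2*a 1) + (1-a 2)^3 + (4:ℝ)*(1-(a 1 + 0.8985))^3)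
          + 9*(2+a 1)*((1:ℝ)*3 + 2*(a 1 + a 2 + (4:ℝ)*(a 1 + 0.8985)) - (a 1^2+a 2^2+(4:ℝ)*(a 1 + 0.8985)^2)) :=
        tail_bound ((1:ℝ)*3) 4 0.8985 (a 1) (a 2) (a 1 + 0.8985) (a 3+a 4+a 5+a 6) (a 3^2+a 4^2+a 5^2+a 6^2) ((1-a 3)^3+(1-a 4)^3+(1-a 5)^3+(1-a 6)^3)
          h0 hx1 (by linarith) (by norm_num) (by norm_num) (by norm_num)
          (by norm_num) (by linarith) hq1' hT hU hV
      _ < 0 := by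
        have := finalP2_3 (a 1) (a 2) h0 hq1' h12 hy1
        exact this
  · -- d = 4
    have hc : cP2a3 4 = 0.8595 := by norm_num [cP2a3]
    rw [hc] at hgap
    have h12 : a 1 ≤ a 2 := hmono 1 (by norm_num) (by norm_num)
    have h23 : a 2 ≤ a 3 := hmono 2 (by norm_num) (by norm_num)
    have h34 : a 3 ≤ a 4 := hmono 3 (by norm_num) (by norm_num)
    have h45 : a 4 ≤ a 5 := hmono 4 (by norm_num) (by norm_num)
    have hr1 : a 5 < 1 := hlt
    have hq3 : a 1 + 0.8595 ≤ a 3 := by linarith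
    have hq4 : a 1 + 0.8595 ≤ a 4 := le_trans hq3 h34
    have hq5 : a 1 + 0.8595 ≤ a 5 := le_trans hq4 h45
    have hq1' : a 1 + 0.8595 ≤ 1 := by linarith
    have hx1 : a 1 ≤ 1 := by linarith
    have hy1 : a 2 ≤ 1 := by linarith
    have hT : (3:ℝ)*(a 1 + 0.8595) ≤ a 3+a 4+a 5 := by linarith
    have hU : 2*(a 1 + 0.8595)*(a 3+a 4+a 5) - (3:ℝ)*(a 1 + 0.8595)^2 ≤ a 3^2+a 4^2+a 5^2 := by nlinarith [sq_nonneg (a 3 - (a 1 + 0.8595)), sq_nonneg (a 4 - (a 1 + 0.8595)), sq_nonneg (a 5 - (a 1 + 0.8595))]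
    have hV3 : (1 - a 3)^3 ≤ (1 - (a 1 + 0.8595))^3 := cube_mono hq3
    have hV4 : (1 - a 4)^3 ≤ (1 - (a 1 + 0.8595))^3 := cube_mono hq4
    have hV5 : (1 - a 5)^3 ≤ (1 - (a 1 + 0.8595))^3 := cube_mono hq5
    have hV : (1-a 3)^3+(1-a 4)^3+(1-a 5)^3 ≤ (3:ℝ)*(1-(a 1 + 0.8595))^3 := by linarith
    have s1 : ∑ i ∈ Finset.Icc 1 5, a i = a 1 + a 2 + (a 3+a 4+a 5) := by
      rw [show Finset.Icc 1 5 = ({1,2,3,4,5} : Finset ℕ) from rfl]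
      norm_num [Finset.sum_insert, Finset.mem_insert]; try ring
    have s2 : ∑ i ∈ Finset.Icc 2 5, (1 - a i)^3 = (1 - a 2)^3 + ((1-a 3)^3+(1-a 4)^3+(1-a 5)^3) := by
      rw [show Finset.Icc 2 5 = ({2,3,4,5} : Finset ℕ) from rfl]
      norm_num [Finset.sum_insert, Finset.mem_insert]; try ring
    have s3 : ∑ i ∈ Finset.Icc 1 5, (a i)^2 = a 1^2 + a 2^2 + (a 3^2+a 4^2+a 5^2) := by
      rw [show Finset.Icc 1 5 = ({1,2,3,4,5} : Finset ℕ) from rfl]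
      norm_num [Finset.sum_insert, Finset.mem_insert]; try ring
    have key : Dpoly 4 a = ((1:ℝ)*4 + (a 1 + a 2 + (a 3+a 4+a 5)))*(-(2+a 1)^2*(5-2*a 1) + (1-a 2)^3 + ((1-a 3)^3+(1-a 4)^3+(1-a 5)^3))
        + 9*(2+a 1)*((1:ℝ)*4 + 2*(a 1 + a 2 + (a 3+a 4+a 5)) - (a 1^2+a 2^2+(a 3^2+a 4^2+a 5^2))) := by
      unfold Dpoly
      rw [show (9 - 4 : ℕ) = 5 from rfl, s1, s2, s3]
      push_cast; ring
    calc Dpoly 4 a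
        = ((1:ℝ)*4 + (a 1 + a 2 + (a 3+a 4+a 5)))*(-(2+a 1)^2*(5-2*a 1) + (1-a 2)^3 + ((1-a 3)^3+(1-a 4)^3+(1-a 5)^3))
          + 9*(2+a 1)*((1:ℝ)*4 + 2*(a 1 + a 2 + (a 3+a 4+a 5)) - (a 1^2+a 2^2+(a 3^2+a 4^2+a 5^2))) := key
      _ ≤ ((1:ℝ)*4 + (a 1 + a 2 + (3:ℝ)*(a 1 + 0.8595)))*(-(2+a 1)^2*(5-2*a 1) + (1-a 2)^3 + (3:ℝ)*(1-(a 1 + 0.8595))^3)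
          + 9*(2+a 1)*((1:ℝ)*4 + 2*(a 1 + a 2 + (3:ℝ)*(a 1 + 0.8595)) - (a 1^2+a 2^2+(3:ℝ)*(a 1 + 0.8595)^2)) :=
        tail_bound ((1:ℝ)*4) 3 0.8595 (a 1) (a 2) (a 1 + 0.8595) (a 3+a 4+a 5) (a 3^2+a 4^2+a 5^2) ((1-a 3)^3+(1-a 4)^3+(1-a 5)^3)
          h0 hx1 (by linarith) (by norm_num) (by norm_num) (by norm_num)
          (by norm_num) (by linarith) hq1' hT hU hV
      _ < 0 := by
        have := finalP2_4 (a 1) (a 2) h0 hq1' h12 hy1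
        exact this
  · -- d = 5
    have hc : cP2a3 5 = 0.7698 := by norm_num [cP2a3]
    rw [hc] at hgap
    have h12 : a 1 ≤ a 2 := hmono 1 (by norm_num) (by norm_num)
    have h23 : a 2 ≤ a 3 := hmono 2 (by norm_num) (by norm_num)
    have h34 : a 3 ≤ a 4 := hmono 3 (by norm_num) (by norm_num)
    have hr1 : a 4 < 1 := hlt
    have hq3 : a 1 + 0.7698 ≤ a 3 := by linarith
    have hq4 : a 1 + 0.7698 ≤ a 4 := le_trans hq3 h34
    have hq1' : a 1 + 0.7698 ≤ 1 := by linarith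
    have hx1 : a 1 ≤ 1 := by linarith
    have hy1 : a 2 ≤ 1 := by linarith
    have hT : (2:ℝ)*(a 1 + 0.7698) ≤ a 3+a 4 := by linarith
    have hU : 2*(a 1 + 0.7698)*(a 3+a 4) - (2:ℝ)*(a 1 + 0.7698)^2 ≤ a 3^2+a 4^2 := by nlinarith [sq_nonneg (a 3 - (a 1 + 0.7698)), sq_nonneg (a 4 - (a 1 + 0.7698))]
    have hV3 : (1 - a 3)^3 ≤ (1 - (a 1 + 0.7698))^3 := cube_mono hq3
    have hV4 : (1 - a 4)^3 ≤ (1 - (a 1 + 0.7698))^3 := cube_mono hq4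
    have hV : (1-a 3)^3+(1-a 4)^3 ≤ (2:ℝ)*(1-(a 1 + 0.7698))^3 := by linarith
    have s1 : ∑ i ∈ Finset.Icc 1 4, a i = a 1 + a 2 + (a 3+a 4) := by
      rw [show Finset.Icc 1 4 = ({1,2,3,4} : Finset ℕ) from rfl]
      norm_num [Finset.sum_insert, Finset.mem_insert]; try ring
    have s2 : ∑ i ∈ Finset.Icc 2 4, (1 - a i)^3 = (1 - a 2)^3 + ((1-a 3)^3+(1-a 4)^3) := by
      rw [show Finset.Icc 2 4 = ({2,3,4} : Finset ℕ) from rfl]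
      norm_num [Finset.sum_insert, Finset.mem_insert]; try ring
    have s3 : ∑ i ∈ Finset.Icc 1 4, (a i)^2 = a 1^2 + a 2^2 + (a 3^2+a 4^2) := by
      rw [show Finset.Icc 1 4 = ({1,2,3,4} : Finset ℕ) from rfl]
      norm_num [Finset.sum_insert, Finset.mem_insert]; try ring
    have key : Dpoly 5 a = ((1:ℝ)*5 + (a 1 + a 2 + (a 3+a 4)))*(-(2+a 1)^2*(5-2*a 1) + (1-a 2)^3 + ((1-a 3)^3+(1-a 4)^3))
        + 9*(2+a 1)*((1:ℝ)*5 + 2*(a 1 + a 2 + (a 3+a 4)) - (a 1^2+a 2^2+(a 3^2+a 4^2))) := by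
      unfold Dpoly
      rw [show (9 - 5 : ℕ) = 4 from rfl, s1, s2, s3]
      push_cast; ring
    calc Dpoly 5 a
        = ((1:ℝ)*5 + (a 1 + a 2 + (a 3+a 4)))*(-(2+a 1)^2*(5-2*a 1) + (1-a 2)^3 + ((1-a 3)^3+(1-a 4)^3))
          + 9*(2+a 1)*((1:ℝ)*5 + 2*(a 1 + a 2 + (a 3+a 4)) - (a 1^2+a 2^2+(a 3^2+a 4^2))) := key
      _ ≤ ((1:ℝ)*5 + (a 1 + a 2 + (2:ℝ)*(a 1 + 0.7698)))*(-(2+a 1)^2*(5-2*a 1) + (1-a 2)^3 + (2:ℝ)*(1-(a 1 + 0.7698))^3)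
          + 9*(2+a 1)*((1:ℝ)*5 + 2*(a 1 + a 2 + (2:ℝ)*(a 1 + 0.7698)) - (a 1^2+a 2^2+(2:ℝ)*(a 1 + 0.7698)^2)) :=
        tail_bound ((1:ℝ)*5) 2 0.7698 (a 1) (a 2) (a 1 + 0.7698) (a 3+a 4) (a 3^2+a 4^2) ((1-a 3)^3+(1-a 4)^3)
          h0 hx1 (by linarith) (by norm_num) (by norm_num) (by norm_num)
          (by norm_num) (by linarith) hq1' hT hU hV
      _ < 0 := by
        have := finalP2_5 (a 1) (a 2) h0 hq1' h12 hy1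
        exact this
end

section
/- For all real numbers a_1, a_2 with 0 ≤ a_1 ≤ a_2 < 1 one has a_1^3 + 3a_1^2 − 6a_1·a_2 + 6a_1 + a_2^3 + 3a_2^2 + 6a_2 − 14 ≤ −2(1−a_2)^3, and in particular a_1^3 + 3a_1^2 − 6a_1·a_2 + 6a_1 + a_2^3 + 3a_2^2 + 6a_2 − 14 < 0. -/
theorem deg7_P2_cubic_inequality (a1 a2 : ℝ)
    (h0 : 0 ≤ a1) (h12 : a1 ≤ a2) (h2 : a2 < 1) :
    a1 ^ 3 + 3 * a1 ^ 2 - 6 * a1 * a2 + 6 * a1 + a2 ^ 3 + 3 * a2 ^ 2 + 6 * a2 - 14 ≤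
        -2 * (1 - a2) ^ 3 ∧
      a1 ^ 3 + 3 * a1 ^ 2 - 6 * a1 * a2 + 6 * a1 + a2 ^ 3 + 3 * a2 ^ 2 + 6 * a2 - 14 < 0 := by
  constructor
  · nlinarith [sq_nonneg (a2 - a1), sq_nonneg (1 - a2), sq_nonneg (1 - a1), mul_nonneg (sub_nonneg.2 h12) (sub_nonneg.2 h2.le), sq_nonneg (a1 + a2), mul_nonneg h0 (sub_nonneg.2 h2.le)]
  · nlinarith [sq_nonneg (a2 - a1), sq_nonneg (1 - a2), sq_nonneg (1 - a1), mul_nonneg (sub_nonneg.2 h12) (sub_nonneg.2 h2.le), mul_nonneg h0 (sub_nonneg.2 h2.le), pow_lt_one₀ (le_trans h0 h12) h2 three_ne_zero]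
end

section
/- For all real numbers a_1, b with 0 ≤ a_1 < 1 and b ≥ 0 one has (3a_1^2 − 3)·b^2 + (2a_1^3 + 12a_1^2 − 6a_1 − 16)·b + a_1^4 + 4a_1^3 + 9a_1^2 − 8a_1 − 13 < 0. -/
theorem deg7_F1_inequality (a1 b : ℝ)
    (h0 : 0 ≤ a1) (h1 : a1 < 1) (hb : 0 ≤ b) :
    (3 * a1 ^ 2 - 3) * b ^ 2 + (2 * a1 ^ 3 + 12 * a1 ^ 2 - 6 * a1 - 16) * b +
      a1 ^ 4 + 4 * a1 ^ 3 + 9 * a1 ^ 2 - 8 * a1 - 13 < 0 := by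
  have h2 : (3 * a1 ^ 2 - 3) * b ^ 2 ≤ 0 := by
    apply mul_nonpos_of_nonpos_of_nonneg
    · nlinarith
    · positivity
  have h3 : (2 * a1 ^ 3 + 12 * a1 ^ 2 - 6 * a1 - 16) * b ≤ 0 := by
    apply mul_nonpos_of_nonpos_of_nonneg _ hb
    nlinarith [sq_nonneg a1, pow_le_one₀ h0 h1.le (n := 3), pow_le_one₀ h0 h1.le (n := 2)]
  have h4 : a1 ^ 4 + 4 * a1 ^ 3 + 9 * a1 ^ 2 - 8 * a1 - 13 < 0 := by
    nlinarith [pow_le_one₀ h0 h1.le (n := 4), pow_le_one₀ h0 h1.le (n := 3), pow_le_one₀ h0 h1.le (n := 2)]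
  linarith
end
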